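/- Let N³ and Y³ be closed oriented Riemannian 3-manifolds, β a closed nowhere-vanishing harmonic 1-form on N, and α a closed harmonic 1-form on Y. Then the 2-form ω = β∧α + *_N β + *_Y α on N×Y (with the product metric, pulling back each summand appropriately) is closed, and at a point (n,y), ω∧ω = 0 if and only if α_y = 0. -/

import Mathlib

open Matrix

noncomputable section

/-- The Levi-Civita symbol on `Fin 3`. -/
def eps (i j k : Fin 3) : ℝ :=
  (((j : ℕ) : ℝ) - ((i : ℕ) : ℝ)) * (((k : ℕ) : ℝ) - ((i : ℕ) : ℝ))
    * (((k : ℕ) : ℝ) - ((j : ℕ) : ℝ)) / 2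

/-- The Hodge star of a 1-form `β` on a Riemannian 3-manifold (in a chart, with metric
matrix `g`): `(*β)_{ij} = √(det g) Σ_k ε_{ijk} (g⁻¹β)^k`. -/
def star1 (g : Matrix (Fin 3) (Fin 3) ℝ) (β : Fin 3 → ℝ) : Matrix (Fin 3) (Fin 3) ℝ :=
  Matrix.of fun i j => Real.sqrt g.det * ∑ k, eps i j k * (g⁻¹ *ᵥ β) k

/-- Partial derivative of a scalar function on `ℝ³`. -/
def pd3 (f : (Fin 3 → ℝ) → ℝ) (p : Fin 3 → ℝ) (i : Fin 3) : ℝ :=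
  fderiv ℝ f p (Pi.single i 1)

/-- The product `N × Y` in charts. -/
abbrev E6 := (Fin 3 → ℝ) × (Fin 3 → ℝ)

/-- Coordinate basis vectors of `N × Y`. -/
def bv : Fin 3 ⊕ Fin 3 → E6 :=
  Sum.elim (fun i => (Pi.single i 1, 0)) (fun i => (0, Pi.single i 1))

/-- The coefficient matrix of `ω = β∧α + *_Nβ + *_Yα` on `N × Y`. -/
def omegaProd (gN gY : (Fin 3 → ℝ) → Matrix (Fin 3) (Fin 3) ℝ)
    (β AltA : (Fin 3 → ℝ) → Fin 3 → ℝ) (q : E6) :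
    Matrix (Fin 3 ⊕ Fin 3) (Fin 3 ⊕ Fin 3) ℝ :=
  Matrix.of fun a b =>
    match a, b with
    | .inl i, .inl j => star1 (gN q.1) (β q.1) i j
    | .inl i, .inr j => β q.1 i * AltA q.2 j
    | .inr i, .inl j => -(β q.1 j * AltA q.2 i)
    | .inr i, .inr j => star1 (gY q.2) (AltA q.2) i j

/-- The 4-form `ω∧ω` evaluated on a quadruple of tangent vectors of `N×Y`
(a positive multiple of the usual normalization). -/
def wedgeSqProd (W : Matrix (Fin 3 ⊕ Fin 3) (Fin 3 ⊕ Fin 3) ℝ)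
    (v : Fin 4 → (Fin 3 ⊕ Fin 3) → ℝ) : ℝ :=
  ∑ σ : Equiv.Perm (Fin 4),
    ((Equiv.Perm.sign σ : ℤ) : ℝ) * (v (σ 0) ⬝ᵥ W *ᵥ v (σ 1)) * (v (σ 2) ⬝ᵥ W *ᵥ v (σ 3))


def pp0 : Equiv.Perm (Fin 4) := ⟨![0,1,2,3], ![0,1,2,3], by decide, by decide⟩
lemma pp0_sign : ((Equiv.Perm.sign pp0 : ℤ) : ℝ) = 1 := by norm_num [show (Equiv.Perm.sign pp0 : ℤ) = 1 from by decide]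
lemma pp0_app0 : pp0 (0 : Fin 4) = 0 := rfl
lemma pp0_app1 : pp0 (1 : Fin 4) = 1 := rfl
lemma pp0_app2 : pp0 (2 : Fin 4) = 2 := rfl
lemma pp0_app3 : pp0 (3 : Fin 4) = 3 := rfl
def pp1 : Equiv.Perm (Fin 4) := ⟨![0,1,3,2], ![0,1,3,2], by decide, by decide⟩
lemma pp1_sign : ((Equiv.Perm.sign pp1 : ℤ) : ℝ) = -1 := by norm_num [show (Equiv.Perm.sign pp1 : ℤ) = -1 from by decide]
lemma pp1_app0 : pp1 (0 : Fin 4) = 0 := rfl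
lemma pp1_app1 : pp1 (1 : Fin 4) = 1 := rfl
lemma pp1_app2 : pp1 (2 : Fin 4) = 3 := rfl
lemma pp1_app3 : pp1 (3 : Fin 4) = 2 := rfl
def pp2 : Equiv.Perm (Fin 4) := ⟨![0,2,1,3], ![0,2,1,3], by decide, by decide⟩
lemma pp2_sign : ((Equiv.Perm.sign pp2 : ℤ) : ℝ) = -1 := by norm_num [show (Equiv.Perm.sign pp2 : ℤ) = -1 from by decide]
lemma pp2_app0 : pp2 (0 : Fin 4) = 0 := rfl
lemma pp2_app1 : pp2 (1 : Fin 4) = 2 := rfl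
lemma pp2_app2 : pp2 (2 : Fin 4) = 1 := rfl
lemma pp2_app3 : pp2 (3 : Fin 4) = 3 := rfl
def pp3 : Equiv.Perm (Fin 4) := ⟨![0,2,3,1], ![0,3,1,2], by decide, by decide⟩
lemma pp3_sign : ((Equiv.Perm.sign pp3 : ℤ) : ℝ) = 1 := by norm_num [show (Equiv.Perm.sign pp3 : ℤ) = 1 from by decide]
lemma pp3_app0 : pp3 (0 : Fin 4) = 0 := rfl
lemma pp3_app1 : pp3 (1 : Fin 4) = 2 := rfl
lemma pp3_app2 : pp3 (2 : Fin 4) = 3 := rfl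
lemma pp3_app3 : pp3 (3 : Fin 4) = 1 := rfl
def pp4 : Equiv.Perm (Fin 4) := ⟨![0,3,1,2], ![0,2,3,1], by decide, by decide⟩
lemma pp4_sign : ((Equiv.Perm.sign pp4 : ℤ) : ℝ) = 1 := by norm_num [show (Equiv.Perm.sign pp4 : ℤ) = 1 from by decide]
lemma pp4_app0 : pp4 (0 : Fin 4) = 0 := rfl
lemma pp4_app1 : pp4 (1 : Fin 4) = 3 := rfl
lemma pp4_app2 : pp4 (2 : Fin 4) = 1 := rfl
lemma pp4_app3 : pp4 (3 : Fin 4) = 2 := rfl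
def pp5 : Equiv.Perm (Fin 4) := ⟨![0,3,2,1], ![0,3,2,1], by decide, by decide⟩
lemma pp5_sign : ((Equiv.Perm.sign pp5 : ℤ) : ℝ) = -1 := by norm_num [show (Equiv.Perm.sign pp5 : ℤ) = -1 from by decide]
lemma pp5_app0 : pp5 (0 : Fin 4) = 0 := rfl
lemma pp5_app1 : pp5 (1 : Fin 4) = 3 := rfl
lemma pp5_app2 : pp5 (2 : Fin 4) = 2 := rfl
lemma pp5_app3 : pp5 (3 : Fin 4) = 1 := rfl
def pp6 : Equiv.Perm (Fin 4) := ⟨![1,0,2,3], ![1,0,2,3], by decide, by decide⟩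
lemma pp6_sign : ((Equiv.Perm.sign pp6 : ℤ) : ℝ) = -1 := by norm_num [show (Equiv.Perm.sign pp6 : ℤ) = -1 from by decide]
lemma pp6_app0 : pp6 (0 : Fin 4) = 1 := rfl
lemma pp6_app1 : pp6 (1 : Fin 4) = 0 := rfl
lemma pp6_app2 : pp6 (2 : Fin 4) = 2 := rfl
lemma pp6_app3 : pp6 (3 : Fin 4) = 3 := rfl
def pp7 : Equiv.Perm (Fin 4) := ⟨![1,0,3,2], ![1,0,3,2], by decide, by decide⟩
lemma pp7_sign : ((Equiv.Perm.sign pp7 : ℤ) : ℝ) = 1 := by norm_num [show (Equiv.Perm.sign pp7 : ℤ) = 1 from by decide]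
lemma pp7_app0 : pp7 (0 : Fin 4) = 1 := rfl
lemma pp7_app1 : pp7 (1 : Fin 4) = 0 := rfl
lemma pp7_app2 : pp7 (2 : Fin 4) = 3 := rfl
lemma pp7_app3 : pp7 (3 : Fin 4) = 2 := rfl
def pp8 : Equiv.Perm (Fin 4) := ⟨![1,2,0,3], ![2,0,1,3], by decide, by decide⟩
lemma pp8_sign : ((Equiv.Perm.sign pp8 : ℤ) : ℝ) = 1 := by norm_num [show (Equiv.Perm.sign pp8 : ℤ) = 1 from by decide]
lemma pp8_app0 : pp8 (0 : Fin 4) = 1 := rfl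
lemma pp8_app1 : pp8 (1 : Fin 4) = 2 := rfl
lemma pp8_app2 : pp8 (2 : Fin 4) = 0 := rfl
lemma pp8_app3 : pp8 (3 : Fin 4) = 3 := rfl
def pp9 : Equiv.Perm (Fin 4) := ⟨![1,2,3,0], ![3,0,1,2], by decide, by decide⟩
lemma pp9_sign : ((Equiv.Perm.sign pp9 : ℤ) : ℝ) = -1 := by norm_num [show (Equiv.Perm.sign pp9 : ℤ) = -1 from by decide]
lemma pp9_app0 : pp9 (0 : Fin 4) = 1 := rfl
lemma pp9_app1 : pp9 (1 : Fin 4) = 2 := rfl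
lemma pp9_app2 : pp9 (2 : Fin 4) = 3 := rfl
lemma pp9_app3 : pp9 (3 : Fin 4) = 0 := rfl
def pp10 : Equiv.Perm (Fin 4) := ⟨![1,3,0,2], ![2,0,3,1], by decide, by decide⟩
lemma pp10_sign : ((Equiv.Perm.sign pp10 : ℤ) : ℝ) = -1 := by norm_num [show (Equiv.Perm.sign pp10 : ℤ) = -1 from by decide]
lemma pp10_app0 : pp10 (0 : Fin 4) = 1 := rfl
lemma pp10_app1 : pp10 (1 : Fin 4) = 3 := rfl
lemma pp10_app2 : pp10 (2 : Fin 4) = 0 := rfl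
lemma pp10_app3 : pp10 (3 : Fin 4) = 2 := rfl
def pp11 : Equiv.Perm (Fin 4) := ⟨![1,3,2,0], ![3,0,2,1], by decide, by decide⟩
lemma pp11_sign : ((Equiv.Perm.sign pp11 : ℤ) : ℝ) = 1 := by norm_num [show (Equiv.Perm.sign pp11 : ℤ) = 1 from by decide]
lemma pp11_app0 : pp11 (0 : Fin 4) = 1 := rfl
lemma pp11_app1 : pp11 (1 : Fin 4) = 3 := rfl
lemma pp11_app2 : pp11 (2 : Fin 4) = 2 := rfl
lemma pp11_app3 : pp11 (3 : Fin 4) = 0 := rfl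
def pp12 : Equiv.Perm (Fin 4) := ⟨![2,0,1,3], ![1,2,0,3], by decide, by decide⟩
lemma pp12_sign : ((Equiv.Perm.sign pp12 : ℤ) : ℝ) = 1 := by norm_num [show (Equiv.Perm.sign pp12 : ℤ) = 1 from by decide]
lemma pp12_app0 : pp12 (0 : Fin 4) = 2 := rfl
lemma pp12_app1 : pp12 (1 : Fin 4) = 0 := rfl
lemma pp12_app2 : pp12 (2 : Fin 4) = 1 := rfl
lemma pp12_app3 : pp12 (3 : Fin 4) = 3 := rfl
def pp13 : Equiv.Perm (Fin 4) := ⟨![2,0,3,1], ![1,3,0,2], by decide, by decide⟩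
lemma pp13_sign : ((Equiv.Perm.sign pp13 : ℤ) : ℝ) = -1 := by norm_num [show (Equiv.Perm.sign pp13 : ℤ) = -1 from by decide]
lemma pp13_app0 : pp13 (0 : Fin 4) = 2 := rfl
lemma pp13_app1 : pp13 (1 : Fin 4) = 0 := rfl
lemma pp13_app2 : pp13 (2 : Fin 4) = 3 := rfl
lemma pp13_app3 : pp13 (3 : Fin 4) = 1 := rfl
def pp14 : Equiv.Perm (Fin 4) := ⟨![2,1,0,3], ![2,1,0,3], by decide, by decide⟩
lemma pp14_sign : ((Equiv.Perm.sign pp14 : ℤ) : ℝ) = -1 := by norm_num [show (Equiv.Perm.sign pp14 : ℤ) = -1 from by decide]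
lemma pp14_app0 : pp14 (0 : Fin 4) = 2 := rfl
lemma pp14_app1 : pp14 (1 : Fin 4) = 1 := rfl
lemma pp14_app2 : pp14 (2 : Fin 4) = 0 := rfl
lemma pp14_app3 : pp14 (3 : Fin 4) = 3 := rfl
def pp15 : Equiv.Perm (Fin 4) := ⟨![2,1,3,0], ![3,1,0,2], by decide, by decide⟩
lemma pp15_sign : ((Equiv.Perm.sign pp15 : ℤ) : ℝ) = 1 := by norm_num [show (Equiv.Perm.sign pp15 : ℤ) = 1 from by decide]
lemma pp15_app0 : pp15 (0 : Fin 4) = 2 := rfl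
lemma pp15_app1 : pp15 (1 : Fin 4) = 1 := rfl
lemma pp15_app2 : pp15 (2 : Fin 4) = 3 := rfl
lemma pp15_app3 : pp15 (3 : Fin 4) = 0 := rfl
def pp16 : Equiv.Perm (Fin 4) := ⟨![2,3,0,1], ![2,3,0,1], by decide, by decide⟩
lemma pp16_sign : ((Equiv.Perm.sign pp16 : ℤ) : ℝ) = 1 := by norm_num [show (Equiv.Perm.sign pp16 : ℤ) = 1 from by decide]
lemma pp16_app0 : pp16 (0 : Fin 4) = 2 := rfl
lemma pp16_app1 : pp16 (1 : Fin 4) = 3 := rfl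
lemma pp16_app2 : pp16 (2 : Fin 4) = 0 := rfl
lemma pp16_app3 : pp16 (3 : Fin 4) = 1 := rfl
def pp17 : Equiv.Perm (Fin 4) := ⟨![2,3,1,0], ![3,2,0,1], by decide, by decide⟩
lemma pp17_sign : ((Equiv.Perm.sign pp17 : ℤ) : ℝ) = -1 := by norm_num [show (Equiv.Perm.sign pp17 : ℤ) = -1 from by decide]
lemma pp17_app0 : pp17 (0 : Fin 4) = 2 := rfl
lemma pp17_app1 : pp17 (1 : Fin 4) = 3 := rfl
lemma pp17_app2 : pp17 (2 : Fin 4) = 1 := rfl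
lemma pp17_app3 : pp17 (3 : Fin 4) = 0 := rfl
def pp18 : Equiv.Perm (Fin 4) := ⟨![3,0,1,2], ![1,2,3,0], by decide, by decide⟩
lemma pp18_sign : ((Equiv.Perm.sign pp18 : ℤ) : ℝ) = -1 := by norm_num [show (Equiv.Perm.sign pp18 : ℤ) = -1 from by decide]
lemma pp18_app0 : pp18 (0 : Fin 4) = 3 := rfl
lemma pp18_app1 : pp18 (1 : Fin 4) = 0 := rfl
lemma pp18_app2 : pp18 (2 : Fin 4) = 1 := rfl
lemma pp18_app3 : pp18 (3 : Fin 4) = 2 := rfl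
def pp19 : Equiv.Perm (Fin 4) := ⟨![3,0,2,1], ![1,3,2,0], by decide, by decide⟩
lemma pp19_sign : ((Equiv.Perm.sign pp19 : ℤ) : ℝ) = 1 := by norm_num [show (Equiv.Perm.sign pp19 : ℤ) = 1 from by decide]
lemma pp19_app0 : pp19 (0 : Fin 4) = 3 := rfl
lemma pp19_app1 : pp19 (1 : Fin 4) = 0 := rfl
lemma pp19_app2 : pp19 (2 : Fin 4) = 2 := rfl
lemma pp19_app3 : pp19 (3 : Fin 4) = 1 := rfl
def pp20 : Equiv.Perm (Fin 4) := ⟨![3,1,0,2], ![2,1,3,0], by decide, by decide⟩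
lemma pp20_sign : ((Equiv.Perm.sign pp20 : ℤ) : ℝ) = 1 := by norm_num [show (Equiv.Perm.sign pp20 : ℤ) = 1 from by decide]
lemma pp20_app0 : pp20 (0 : Fin 4) = 3 := rfl
lemma pp20_app1 : pp20 (1 : Fin 4) = 1 := rfl
lemma pp20_app2 : pp20 (2 : Fin 4) = 0 := rfl
lemma pp20_app3 : pp20 (3 : Fin 4) = 2 := rfl
def pp21 : Equiv.Perm (Fin 4) := ⟨![3,1,2,0], ![3,1,2,0], by decide, by decide⟩
lemma pp21_sign : ((Equiv.Perm.sign pp21 : ℤ) : ℝ) = -1 := by norm_num [show (Equiv.Perm.sign pp21 : ℤ) = -1 from by decide]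
lemma pp21_app0 : pp21 (0 : Fin 4) = 3 := rfl
lemma pp21_app1 : pp21 (1 : Fin 4) = 1 := rfl
lemma pp21_app2 : pp21 (2 : Fin 4) = 2 := rfl
lemma pp21_app3 : pp21 (3 : Fin 4) = 0 := rfl
def pp22 : Equiv.Perm (Fin 4) := ⟨![3,2,0,1], ![2,3,1,0], by decide, by decide⟩
lemma pp22_sign : ((Equiv.Perm.sign pp22 : ℤ) : ℝ) = -1 := by norm_num [show (Equiv.Perm.sign pp22 : ℤ) = -1 from by decide]
lemma pp22_app0 : pp22 (0 : Fin 4) = 3 := rfl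
lemma pp22_app1 : pp22 (1 : Fin 4) = 2 := rfl
lemma pp22_app2 : pp22 (2 : Fin 4) = 0 := rfl
lemma pp22_app3 : pp22 (3 : Fin 4) = 1 := rfl
def pp23 : Equiv.Perm (Fin 4) := ⟨![3,2,1,0], ![3,2,1,0], by decide, by decide⟩
lemma pp23_sign : ((Equiv.Perm.sign pp23 : ℤ) : ℝ) = 1 := by norm_num [show (Equiv.Perm.sign pp23 : ℤ) = 1 from by decide]
lemma pp23_app0 : pp23 (0 : Fin 4) = 3 := rfl
lemma pp23_app1 : pp23 (1 : Fin 4) = 2 := rfl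
lemma pp23_app2 : pp23 (2 : Fin 4) = 1 := rfl
lemma pp23_app3 : pp23 (3 : Fin 4) = 0 := rfl

def permList : List (Equiv.Perm (Fin 4)) := [pp0, pp1, pp2, pp3, pp4, pp5, pp6, pp7, pp8, pp9, pp10, pp11, pp12, pp13, pp14, pp15, pp16, pp17, pp18, pp19, pp20, pp21, pp22, pp23]


lemma sum_perm_fin4 (F : Equiv.Perm (Fin 4) → ℝ) :
    ∑ σ : Equiv.Perm (Fin 4), F σ = (permList.map F).sum := by
  have h1 : permList.toFinset = (Finset.univ : Finset (Equiv.Perm (Fin 4))) := by decide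
  have h2 : permList.Nodup := by decide
  rw [← h1, List.sum_toFinset _ h2]

lemma wedgeSq_eq (W : Matrix (Fin 3 ⊕ Fin 3) (Fin 3 ⊕ Fin 3) ℝ)
    (hW : Wᵀ = -W) (v : Fin 4 → (Fin 3 ⊕ Fin 3) → ℝ) :
    wedgeSqProd W v = 8 * ((v 0 ⬝ᵥ W *ᵥ v 1) * (v 2 ⬝ᵥ W *ᵥ v 3)
      - (v 0 ⬝ᵥ W *ᵥ v 2) * (v 1 ⬝ᵥ W *ᵥ v 3)
      + (v 0 ⬝ᵥ W *ᵥ v 3) * (v 1 ⬝ᵥ W *ᵥ v 2)) := by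
  have hP : ∀ a b : Fin 4, v b ⬝ᵥ W *ᵥ v a = -(v a ⬝ᵥ W *ᵥ v b) := by
    intro a b
    rw [Matrix.dotProduct_mulVec, ← Matrix.mulVec_transpose, hW, Matrix.neg_mulVec,
      neg_dotProduct, dotProduct_comm, Matrix.dotProduct_mulVec]
  have h10 := hP 0 1
  have h20 := hP 0 2
  have h30 := hP 0 3
  have h21 := hP 1 2
  have h31 := hP 1 3
  have h32 := hP 2 3
  unfold wedgeSqProd
  rw [sum_perm_fin4]
  simp only [permList, List.map_cons, List.map_nil, List.sum_cons, List.sum_nil,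
    pp0_sign, pp0_app0, pp0_app1, pp0_app2, pp0_app3, pp1_sign, pp1_app0, pp1_app1, pp1_app2, pp1_app3, pp2_sign, pp2_app0, pp2_app1, pp2_app2, pp2_app3, pp3_sign, pp3_app0, pp3_app1, pp3_app2, pp3_app3, pp4_sign, pp4_app0, pp4_app1, pp4_app2, pp4_app3, pp5_sign, pp5_app0, pp5_app1, pp5_app2, pp5_app3, pp6_sign, pp6_app0, pp6_app1, pp6_app2, pp6_app3, pp7_sign, pp7_app0, pp7_app1, pp7_app2, pp7_app3, pp8_sign, pp8_app0, pp8_app1, pp8_app2, pp8_app3, pp9_sign, pp9_app0, pp9_app1, pp9_app2, pp9_app3, pp10_sign, pp10_app0, pp10_app1, pp10_app2, pp10_app3, pp11_sign, pp11_app0, pp11_app1, pp11_app2, pp11_app3, pp12_sign, pp12_app0, pp12_app1, pp12_app2, pp12_app3, pp13_sign, pp13_app0, pp13_app1, pp13_app2, pp13_app3, pp14_sign, pp14_app0, pp14_app1, pp14_app2, pp14_app3, pp15_sign, pp15_app0, pp15_app1, pp15_app2, pp15_app3, pp16_sign, pp16_app0, pp16_app1, pp16_app2, pp16_app3, pp17_sign,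 pp17_app0, pp17_app1, pp17_app2, pp17_app3, pp18_sign, pp18_app0, pp18_app1, pp18_app2, pp18_app3, pp19_sign, pp19_app0, pp19_app1, pp19_app2, pp19_app3, pp20_sign, pp20_app0, pp20_app1, pp20_app2, pp20_app3, pp21_sign, pp21_app0, pp21_app1, pp21_app2, pp21_app3, pp22_sign, pp22_app0, pp22_app1, pp22_app2, pp22_app3, pp23_sign, pp23_app0, pp23_app1, pp23_app2, pp23_app3, h10, h20, h30, h21, h31, h32]
  ring

lemma eps_swap (i j k : Fin 3) : eps j i k = -eps i j k := by
  have h3 : ∀ a : Fin 3, a = 0 ∨ a = 1 ∨ a = 2 := by decide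
  rcases h3 i with rfl | rfl | rfl <;> rcases h3 j with rfl | rfl | rfl <;>
    rcases h3 k with rfl | rfl | rfl <;> norm_num [eps]

lemma star1_swap (g : Matrix (Fin 3) (Fin 3) ℝ) (b : Fin 3 → ℝ) (i j : Fin 3) :
    star1 g b j i = -star1 g b i j := by
  show (Real.sqrt g.det * ∑ k, eps j i k * (g⁻¹ *ᵥ b) k)
    = -(Real.sqrt g.det * ∑ k, eps i j k * (g⁻¹ *ᵥ b) k)
  have : (∑ k, eps j i k * (g⁻¹ *ᵥ b) k) = -∑ k, eps i j k * (g⁻¹ *ᵥ b) k := by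
    rw [← Finset.sum_neg_distrib]
    exact Finset.sum_congr rfl fun k _ => by rw [eps_swap]; ring
  rw [this]; ring

lemma star1_zero (g : Matrix (Fin 3) (Fin 3) ℝ) (i j : Fin 3) : star1 g 0 i j = 0 := by
  show Real.sqrt g.det * ∑ k, eps i j k * (g⁻¹ *ᵥ 0) k = 0
  simp [Matrix.mulVec_zero]

lemma star1_diff (g : (Fin 3 → ℝ) → Matrix (Fin 3) (Fin 3) ℝ)
    (hg : ∀ p, (g p).PosDef) (hgs : ∀ i j, ContDiff ℝ (⊤ : ℕ∞) fun p => g p i j)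
    (b : (Fin 3 → ℝ) → Fin 3 → ℝ) (hbs : ∀ i, ContDiff ℝ (⊤ : ℕ∞) fun p => b p i)
    (i j : Fin 3) : Differentiable ℝ fun p => star1 (g p) (b p) i j := by
  have hD : ∀ i j, Differentiable ℝ fun p => g p i j := fun i j => (hgs i j).differentiable (by simp)
  have hbD : ∀ i, Differentiable ℝ fun p => b p i := fun i => (hbs i).differentiable (by simp)
  have hdet : Differentiable ℝ fun p => (g p).det := by
    simp only [Matrix.det_fin_three]
    fun_prop
  have hdet0 : ∀ p, (g p).det ≠ 0 := fun p => (hg p).det_pos.ne'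
  have hadj : ∀ k l, Differentiable ℝ fun p => (g p).adjugate k l := by
    have key : ∀ k l, (fun p => (g p).adjugate k l)
        = fun p => g p (l+1) (k+1) * g p (l+2) (k+2) - g p (l+1) (k+2) * g p (l+2) (k+1) := by
      intro k l
      funext p
      fin_cases k <;> fin_cases l <;>
        simp [Matrix.adjugate_fin_three] <;> ring
    intro k l
    rw [key]
    exact ((hD (l+1) (k+1)).mul (hD (l+2) (k+2))).sub ((hD (l+1) (k+2)).mul (hD (l+2) (k+1)))
  have hinv : ∀ k l, Differentiable ℝ fun p => (g p)⁻¹ k l := by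
    intro k l
    have : (fun p => (g p)⁻¹ k l) = fun p => ((g p).det)⁻¹ * (g p).adjugate k l := by
      funext p
      rw [Matrix.inv_def, Ring.inverse_eq_inv]
      simp [Matrix.smul_apply, smul_eq_mul]
    rw [this]
    exact (hdet.inv hdet0).mul (hadj k l)
  have hsqrt : Differentiable ℝ fun p => Real.sqrt (g p).det := hdet.sqrt hdet0
  have : (fun p => star1 (g p) (b p) i j)
      = fun p => Real.sqrt (g p).det * ∑ k, eps i j k * ((g p)⁻¹ *ᵥ b p) k := rfl
  rw [this]
  apply hsqrt.mul
  apply Differentiable.fun_sum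
  intro k _
  apply Differentiable.const_mul
  have : (fun p => ((g p)⁻¹ *ᵥ b p) k) = fun p => ∑ l, (g p)⁻¹ k l * b p l := by
    funext p; simp [Matrix.mulVec, dotProduct]
  rw [this]
  exact Differentiable.fun_sum fun l _ => (hinv k l).mul (hbD l)

lemma L_fst (F : (Fin 3 → ℝ) → ℝ) (q : E6) (hF : DifferentiableAt ℝ F q.1) (w : E6) :
    fderiv ℝ (F ∘ Prod.fst) q w = fderiv ℝ F q.1 w.1 := by
  rw [fderiv_comp q hF differentiableAt_fst, fderiv_fst]
  rfl

lemma L_snd (F : (Fin 3 → ℝ) → ℝ) (q : E6) (hF : DifferentiableAt ℝ F q.2) (w : E6) :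
    fderiv ℝ (F ∘ Prod.snd) q w = fderiv ℝ F q.2 w.2 := by
  rw [fderiv_comp q hF differentiableAt_snd, fderiv_snd]
  rfl

lemma L_fst_inl (F : (Fin 3 → ℝ) → ℝ) (q : E6) (hF : DifferentiableAt ℝ F q.1) (i : Fin 3) :
    fderiv ℝ (F ∘ Prod.fst) q (bv (.inl i)) = pd3 F q.1 i := by
  rw [L_fst F q hF]; rfl

lemma L_fst_inr (F : (Fin 3 → ℝ) → ℝ) (q : E6) (hF : DifferentiableAt ℝ F q.1) (i : Fin 3) :
    fderiv ℝ (F ∘ Prod.fst) q (bv (.inr i)) = 0 := by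
  rw [L_fst F q hF]
  show fderiv ℝ F q.1 0 = 0
  simp

lemma L_snd_inl (F : (Fin 3 → ℝ) → ℝ) (q : E6) (hF : DifferentiableAt ℝ F q.2) (i : Fin 3) :
    fderiv ℝ (F ∘ Prod.snd) q (bv (.inl i)) = 0 := by
  rw [L_snd F q hF]
  show fderiv ℝ F q.2 0 = 0
  simp

lemma L_snd_inr (F : (Fin 3 → ℝ) → ℝ) (q : E6) (hF : DifferentiableAt ℝ F q.2) (i : Fin 3) :
    fderiv ℝ (F ∘ Prod.snd) q (bv (.inr i)) = pd3 F q.2 i := by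
  rw [L_snd F q hF]; rfl

lemma aux_mul (F G : (Fin 3 → ℝ) → ℝ) (q : E6) (hF : DifferentiableAt ℝ F q.1)
    (hG : DifferentiableAt ℝ G q.2) (w : E6) :
    fderiv ℝ (fun r : E6 => F r.1 * G r.2) q w
      = fderiv ℝ F q.1 w.1 * G q.2 + F q.1 * fderiv ℝ G q.2 w.2 := by
  have h1 : DifferentiableAt ℝ (fun r : E6 => F r.1) q := hF.comp q differentiableAt_fst
  have h2 : DifferentiableAt ℝ (fun r : E6 => G r.2) q := hG.comp q differentiableAt_snd
  rw [fderiv_fun_mul h1 h2]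
  have e1 : fderiv ℝ (fun r : E6 => F r.1) q w = fderiv ℝ F q.1 w.1 := L_fst F q hF w
  have e2 : fderiv ℝ (fun r : E6 => G r.2) q w = fderiv ℝ G q.2 w.2 := L_snd G q hG w
  simp only [ContinuousLinearMap.add_apply, ContinuousLinearMap.smul_apply, smul_eq_mul, e1, e2]
  ring

lemma aux_mul_inl (F G : (Fin 3 → ℝ) → ℝ) (q : E6) (hF : DifferentiableAt ℝ F q.1)
    (hG : DifferentiableAt ℝ G q.2) (i : Fin 3) :
    fderiv ℝ (fun r : E6 => F r.1 * G r.2) q (bv (.inl i)) = pd3 F q.1 i * G q.2 := by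
  rw [aux_mul F G q hF hG]
  show fderiv ℝ F q.1 (Pi.single i 1) * G q.2 + F q.1 * fderiv ℝ G q.2 0 = _
  simp [pd3]

lemma aux_mul_inr (F G : (Fin 3 → ℝ) → ℝ) (q : E6) (hF : DifferentiableAt ℝ F q.1)
    (hG : DifferentiableAt ℝ G q.2) (i : Fin 3) :
    fderiv ℝ (fun r : E6 => F r.1 * G r.2) q (bv (.inr i)) = F q.1 * pd3 G q.2 i := by
  rw [aux_mul F G q hF hG]
  show fderiv ℝ F q.1 0 * G q.2 + F q.1 * fderiv ℝ G q.2 (Pi.single i 1) = _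
  simp [pd3]

lemma aux_negmul_inl (F G : (Fin 3 → ℝ) → ℝ) (q : E6) (hF : DifferentiableAt ℝ F q.1)
    (hG : DifferentiableAt ℝ G q.2) (i : Fin 3) :
    fderiv ℝ (fun r : E6 => -(F r.1 * G r.2)) q (bv (.inl i)) = -(pd3 F q.1 i * G q.2) := by
  rw [fderiv_fun_neg, ContinuousLinearMap.neg_apply, aux_mul_inl F G q hF hG i]

lemma aux_negmul_inr (F G : (Fin 3 → ℝ) → ℝ) (q : E6) (hF : DifferentiableAt ℝ F q.1)
    (hG : DifferentiableAt ℝ G q.2) (i : Fin 3) :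
    fderiv ℝ (fun r : E6 => -(F r.1 * G r.2)) q (bv (.inr i)) = -(F q.1 * pd3 G q.2 i) := by
  rw [fderiv_fun_neg, ContinuousLinearMap.neg_apply, aux_mul_inr F G q hF hG i]

lemma pd3_neg (f : (Fin 3 → ℝ) → ℝ) (p : Fin 3 → ℝ) (i : Fin 3) :
    pd3 (fun r => -(f r)) p i = -pd3 f p i := by
  simp [pd3, fderiv_neg]

lemma pd3_zero (p : Fin 3 → ℝ) (i : Fin 3) : pd3 (fun _ => (0:ℝ)) p i = 0 := by
  simp [pd3]

lemma closed_key (S : (Fin 3 → ℝ) → Matrix (Fin 3) (Fin 3) ℝ)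
    (hanti : ∀ p i j, S p j i = - S p i j)
    (hharm : ∀ p, pd3 (fun r => S r 1 2) p 0 - pd3 (fun r => S r 0 2) p 1
      + pd3 (fun r => S r 0 1) p 2 = 0)
    (p : Fin 3 → ℝ) (i j k : Fin 3) :
    pd3 (fun r => S r j k) p i + pd3 (fun r => S r k i) p j + pd3 (fun r => S r i j) p k = 0 := by
  have e10 : (fun r => S r 1 0) = (fun r => -S r 0 1) := funext fun r => hanti r 0 1
  have e20 : (fun r => S r 2 0) = (fun r => -S r 0 2) := funext fun r => hanti r 0 2
  have e21 : (fun r => S r 2 1) = (fun r => -S r 1 2) := funext fun r => hanti r 1 2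
  have ed : ∀ a : Fin 3, (fun r => S r a a) = (fun _ => (0:ℝ)) := by
    intro a; funext r; have := hanti r a a; linarith
  have h3 : ∀ a : Fin 3, a = 0 ∨ a = 1 ∨ a = 2 := by decide
  rcases h3 i with rfl | rfl | rfl <;> rcases h3 j with rfl | rfl | rfl <;>
    rcases h3 k with rfl | rfl | rfl <;>
    simp only [e10, e20, e21, ed 0, ed 1, ed 2, pd3_neg, pd3_zero] <;>
    linarith [hharm p]

/-- let `N³`, `Y³` be (charts of) closed oriented Riemannian 3-manifolds
with metrics `gN`, `gY`, let `β` be a closed nowhere-vanishing harmonic 1-form on `N`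
and `α` a closed harmonic 1-form on `Y`. Then `ω = β∧α + *_Nβ + *_Yα` is closed on
`N×Y`, and at a point `(n,y)`, `ω∧ω = 0` if and only if `α_y = 0`. -/
theorem product_near_symplectic
    (gN gY : (Fin 3 → ℝ) → Matrix (Fin 3) (Fin 3) ℝ)
    (hgN : ∀ p, (gN p).PosDef ∧ (gN p).IsSymm)
    (hgY : ∀ p, (gY p).PosDef ∧ (gY p).IsSymm)
    (hgNs : ∀ i j, ContDiff ℝ (⊤ : ℕ∞) fun p => gN p i j)
    (hgYs : ∀ i j, ContDiff ℝ (⊤ : ℕ∞) fun p => gY p i j)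
    (β α : (Fin 3 → ℝ) → Fin 3 → ℝ)
    (hβs : ∀ i, ContDiff ℝ (⊤ : ℕ∞) fun p => β p i)
    (hαs : ∀ i, ContDiff ℝ (⊤ : ℕ∞) fun p => α p i)
    -- β is closed and nowhere vanishing
    (hβclosed : ∀ p i j, pd3 (fun r => β r j) p i = pd3 (fun r => β r i) p j)
    (hβnv : ∀ p, β p ≠ 0)
    -- β is harmonic: d(*_Nβ) = 0
    (hβharm : ∀ p,
      pd3 (fun r => star1 (gN r) (β r) 1 2) p 0
        - pd3 (fun r => star1 (gN r) (β r) 0 2) p 1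
        + pd3 (fun r => star1 (gN r) (β r) 0 1) p 2 = 0)
    -- α is closed and harmonic
    (hαclosed : ∀ p i j, pd3 (fun r => α r j) p i = pd3 (fun r => α r i) p j)
    (hαharm : ∀ p,
      pd3 (fun r => star1 (gY r) (α r) 1 2) p 0
        - pd3 (fun r => star1 (gY r) (α r) 0 2) p 1
        + pd3 (fun r => star1 (gY r) (α r) 0 1) p 2 = 0) :
    -- ω is closed
    (∀ (q : E6) (a b c : Fin 3 ⊕ Fin 3),
      fderiv ℝ (fun r => omegaProd gN gY β α r b c) q (bv a)
        + fderiv ℝ (fun r => omegaProd gN gY β α r c a) q (bv b)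
        + fderiv ℝ (fun r => omegaProd gN gY β α r a b) q (bv c) = 0) ∧
    -- ω∧ω = 0 exactly where α vanishes
    (∀ q : E6,
      (∀ v : Fin 4 → (Fin 3 ⊕ Fin 3) → ℝ, wedgeSqProd (omegaProd gN gY β α q) v = 0)
        ↔ α q.2 = 0) := by
  have hβD : ∀ i, Differentiable ℝ fun p => β p i := fun i => (hβs i).differentiable (by simp)
  have hαD : ∀ i, Differentiable ℝ fun p => α p i := fun i => (hαs i).differentiable (by simp)
  have hSN : ∀ i j, Differentiable ℝ fun p => star1 (gN p) (β p) i j :=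
    star1_diff gN (fun p => (hgN p).1) hgNs β hβs
  have hSY : ∀ i j, Differentiable ℝ fun p => star1 (gY p) (α p) i j :=
    star1_diff gY (fun p => (hgY p).1) hgYs α hαs
  constructor
  · -- closedness
    intro q a b c
    rcases a with i | i <;> rcases b with j | j <;> rcases c with k | k
    · -- LLL
      show fderiv ℝ ((fun p => star1 (gN p) (β p) j k) ∘ Prod.fst) q (bv (Sum.inl i))
        + fderiv ℝ ((fun p => star1 (gN p) (β p) k i) ∘ Prod.fst) q (bv (Sum.inl j))
        + fderiv ℝ ((fun p => star1 (gN p) (β p) i j) ∘ Prod.fst) q (bv (Sum.inl k)) = 0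
      rw [L_fst_inl _ q (hSN j k q.1) i, L_fst_inl _ q (hSN k i q.1) j,
        L_fst_inl _ q (hSN i j q.1) k]
      exact closed_key (fun p => star1 (gN p) (β p))
        (fun p i j => star1_swap (gN p) (β p) i j) hβharm q.1 i j k
    · -- LLR
      show fderiv ℝ (fun r : E6 => β r.1 j * α r.2 k) q (bv (Sum.inl i))
        + fderiv ℝ (fun r : E6 => -(β r.1 i * α r.2 k)) q (bv (Sum.inl j))
        + fderiv ℝ ((fun p => star1 (gN p) (β p) i j) ∘ Prod.fst) q (bv (Sum.inr k)) = 0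
      have e1 : fderiv ℝ (fun r : E6 => β r.1 j * α r.2 k) q (bv (Sum.inl i))
          = pd3 (fun p => β p j) q.1 i * α q.2 k :=
        aux_mul_inl (fun p => β p j) (fun p => α p k) q (hβD j q.1) (hαD k q.2) i
      have e2 : fderiv ℝ (fun r : E6 => -(β r.1 i * α r.2 k)) q (bv (Sum.inl j))
          = -(pd3 (fun p => β p i) q.1 j * α q.2 k) :=
        aux_negmul_inl (fun p => β p i) (fun p => α p k) q (hβD i q.1) (hαD k q.2) j
      rw [e1, e2, L_fst_inr _ q (hSN i j q.1) k, hβclosed q.1 i j]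
      ring
    · -- LRL
      show fderiv ℝ (fun r : E6 => -(β r.1 k * α r.2 j)) q (bv (Sum.inl i))
        + fderiv ℝ ((fun p => star1 (gN p) (β p) k i) ∘ Prod.fst) q (bv (Sum.inr j))
        + fderiv ℝ (fun r : E6 => β r.1 i * α r.2 j) q (bv (Sum.inl k)) = 0
      have e1 : fderiv ℝ (fun r : E6 => -(β r.1 k * α r.2 j)) q (bv (Sum.inl i))
          = -(pd3 (fun p => β p k) q.1 i * α q.2 j) :=
        aux_negmul_inl (fun p => β p k) (fun p => α p j) q (hβD k q.1) (hαD j q.2) i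
      have e3 : fderiv ℝ (fun r : E6 => β r.1 i * α r.2 j) q (bv (Sum.inl k))
          = pd3 (fun p => β p i) q.1 k * α q.2 j :=
        aux_mul_inl (fun p => β p i) (fun p => α p j) q (hβD i q.1) (hαD j q.2) k
      rw [e1, e3, L_fst_inr _ q (hSN k i q.1) j, hβclosed q.1 i k]
      ring
    · -- LRR
      show fderiv ℝ ((fun p => star1 (gY p) (α p) j k) ∘ Prod.snd) q (bv (Sum.inl i))
        + fderiv ℝ (fun r : E6 => -(β r.1 i * α r.2 k)) q (bv (Sum.inr j))
        + fderiv ℝ (fun r : E6 => β r.1 i * α r.2 j) q (bv (Sum.inr k)) = 0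
      have e2 : fderiv ℝ (fun r : E6 => -(β r.1 i * α r.2 k)) q (bv (Sum.inr j))
          = -(β q.1 i * pd3 (fun p => α p k) q.2 j) :=
        aux_negmul_inr (fun p => β p i) (fun p => α p k) q (hβD i q.1) (hαD k q.2) j
      have e3 : fderiv ℝ (fun r : E6 => β r.1 i * α r.2 j) q (bv (Sum.inr k))
          = β q.1 i * pd3 (fun p => α p j) q.2 k :=
        aux_mul_inr (fun p => β p i) (fun p => α p j) q (hβD i q.1) (hαD j q.2) k
      rw [e2, e3, L_snd_inl _ q (hSY j k q.2) i, hαclosed q.2 j k]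
      ring
    · -- RLL
      show fderiv ℝ ((fun p => star1 (gN p) (β p) j k) ∘ Prod.fst) q (bv (Sum.inr i))
        + fderiv ℝ (fun r : E6 => β r.1 k * α r.2 i) q (bv (Sum.inl j))
        + fderiv ℝ (fun r : E6 => -(β r.1 j * α r.2 i)) q (bv (Sum.inl k)) = 0
      have e2 : fderiv ℝ (fun r : E6 => β r.1 k * α r.2 i) q (bv (Sum.inl j))
          = pd3 (fun p => β p k) q.1 j * α q.2 i :=
        aux_mul_inl (fun p => β p k) (fun p => α p i) q (hβD k q.1) (hαD i q.2) j
      have e3 : fderiv ℝ (fun r : E6 => -(β r.1 j * α r.2 i)) q (bv (Sum.inl k))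
          = -(pd3 (fun p => β p j) q.1 k * α q.2 i) :=
        aux_negmul_inl (fun p => β p j) (fun p => α p i) q (hβD j q.1) (hαD i q.2) k
      rw [e2, e3, L_fst_inr _ q (hSN j k q.1) i, hβclosed q.1 j k]
      ring
    · -- RLR
      show fderiv ℝ (fun r : E6 => β r.1 j * α r.2 k) q (bv (Sum.inr i))
        + fderiv ℝ ((fun p => star1 (gY p) (α p) k i) ∘ Prod.snd) q (bv (Sum.inl j))
        + fderiv ℝ (fun r : E6 => -(β r.1 j * α r.2 i)) q (bv (Sum.inr k)) = 0
      have e1 : fderiv ℝ (fun r : E6 => β r.1 j * α r.2 k) q (bv (Sum.inr i))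
          = β q.1 j * pd3 (fun p => α p k) q.2 i :=
        aux_mul_inr (fun p => β p j) (fun p => α p k) q (hβD j q.1) (hαD k q.2) i
      have e3 : fderiv ℝ (fun r : E6 => -(β r.1 j * α r.2 i)) q (bv (Sum.inr k))
          = -(β q.1 j * pd3 (fun p => α p i) q.2 k) :=
        aux_negmul_inr (fun p => β p j) (fun p => α p i) q (hβD j q.1) (hαD i q.2) k
      rw [e1, e3, L_snd_inl _ q (hSY k i q.2) j, hαclosed q.2 i k]
      ring
    · -- RRL
      show fderiv ℝ (fun r : E6 => -(β r.1 k * α r.2 j)) q (bv (Sum.inr i))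
        + fderiv ℝ (fun r : E6 => β r.1 k * α r.2 i) q (bv (Sum.inr j))
        + fderiv ℝ ((fun p => star1 (gY p) (α p) i j) ∘ Prod.snd) q (bv (Sum.inl k)) = 0
      have e1 : fderiv ℝ (fun r : E6 => -(β r.1 k * α r.2 j)) q (bv (Sum.inr i))
          = -(β q.1 k * pd3 (fun p => α p j) q.2 i) :=
        aux_negmul_inr (fun p => β p k) (fun p => α p j) q (hβD k q.1) (hαD j q.2) i
      have e2 : fderiv ℝ (fun r : E6 => β r.1 k * α r.2 i) q (bv (Sum.inr j))
          = β q.1 k * pd3 (fun p => α p i) q.2 j :=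
        aux_mul_inr (fun p => β p k) (fun p => α p i) q (hβD k q.1) (hαD i q.2) j
      rw [e1, e2, L_snd_inl _ q (hSY i j q.2) k, hαclosed q.2 i j]
      ring
    · -- RRR
      show fderiv ℝ ((fun p => star1 (gY p) (α p) j k) ∘ Prod.snd) q (bv (Sum.inr i))
        + fderiv ℝ ((fun p => star1 (gY p) (α p) k i) ∘ Prod.snd) q (bv (Sum.inr j))
        + fderiv ℝ ((fun p => star1 (gY p) (α p) i j) ∘ Prod.snd) q (bv (Sum.inr k)) = 0
      rw [L_snd_inr _ q (hSY j k q.2) i, L_snd_inr _ q (hSY k i q.2) j,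
        L_snd_inr _ q (hSY i j q.2) k]
      exact closed_key (fun p => star1 (gY p) (α p))
        (fun p i j => star1_swap (gY p) (α p) i j) hαharm q.2 i j k
  · -- wedge square
    intro q
    set W := omegaProd gN gY β α q with hWdef
    have hWt : Wᵀ = -W := by
      ext a b
      rw [Matrix.transpose_apply, Matrix.neg_apply]
      rcases a with i | i <;> rcases b with j | j
      · exact star1_swap (gN q.1) (β q.1) i j
      · rfl
      · exact (neg_neg _).symm
      · exact star1_swap (gY q.2) (α q.2) i j
    constructor
    · intro h
      funext k
      have h4 := h ![Pi.single (Sum.inl 0) 1, Pi.single (Sum.inl 1) 1,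
        Pi.single (Sum.inl 2) 1, Pi.single (Sum.inr k) 1]
      rw [wedgeSq_eq W hWt] at h4
      have hv0 : (![Pi.single (Sum.inl 0) 1, Pi.single (Sum.inl 1) 1,
        Pi.single (Sum.inl 2) 1, Pi.single (Sum.inr k) 1] :
          Fin 4 → (Fin 3 ⊕ Fin 3) → ℝ) 0 = Pi.single (Sum.inl 0) 1 := rfl
      have hv1 : (![Pi.single (Sum.inl 0) 1, Pi.single (Sum.inl 1) 1,
        Pi.single (Sum.inl 2) 1, Pi.single (Sum.inr k) 1] :
          Fin 4 → (Fin 3 ⊕ Fin 3) → ℝ) 1 = Pi.single (Sum.inl 1) 1 := rfl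
      have hv2 : (![Pi.single (Sum.inl 0) 1, Pi.single (Sum.inl 1) 1,
        Pi.single (Sum.inl 2) 1, Pi.single (Sum.inr k) 1] :
          Fin 4 → (Fin 3 ⊕ Fin 3) → ℝ) 2 = Pi.single (Sum.inl 2) 1 := rfl
      have hv3 : (![Pi.single (Sum.inl 0) 1, Pi.single (Sum.inl 1) 1,
        Pi.single (Sum.inl 2) 1, Pi.single (Sum.inr k) 1] :
          Fin 4 → (Fin 3 ⊕ Fin 3) → ℝ) 3 = Pi.single (Sum.inr k) 1 := rfl
      rw [hv0, hv1, hv2, hv3] at h4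
      have ee : ∀ a b : Fin 3 ⊕ Fin 3,
          (Pi.single a (1:ℝ)) ⬝ᵥ W *ᵥ (Pi.single b 1) = W a b := by
        intro a b
        rw [Matrix.mulVec_single, single_dotProduct]
        simp
      rw [ee, ee, ee, ee, ee, ee] at h4
      have w01 : W (Sum.inl 0) (Sum.inl 1) = star1 (gN q.1) (β q.1) 0 1 := rfl
      have w02 : W (Sum.inl 0) (Sum.inl 2) = star1 (gN q.1) (β q.1) 0 2 := rfl
      have w12 : W (Sum.inl 1) (Sum.inl 2) = star1 (gN q.1) (β q.1) 1 2 := rfl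
      have w0k : W (Sum.inl 0) (Sum.inr k) = β q.1 0 * α q.2 k := rfl
      have w1k : W (Sum.inl 1) (Sum.inr k) = β q.1 1 * α q.2 k := rfl
      have w2k : W (Sum.inl 2) (Sum.inr k) = β q.1 2 * α q.2 k := rfl
      rw [w01, w02, w12, w0k, w1k, w2k] at h4
      set s := Real.sqrt (gN q.1).det with hs
      set u := (gN q.1)⁻¹ *ᵥ β q.1 with hu
      have s01 : star1 (gN q.1) (β q.1) 0 1 = s * u 2 := by
        show s * ∑ m, eps 0 1 m * u m = s * u 2
        rw [Fin.sum_univ_three]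
        norm_num [eps]
      have s02 : star1 (gN q.1) (β q.1) 0 2 = -(s * u 1) := by
        show s * ∑ m, eps 0 2 m * u m = -(s * u 1)
        rw [Fin.sum_univ_three]
        norm_num [eps]
      have s12 : star1 (gN q.1) (β q.1) 1 2 = s * u 0 := by
        show s * ∑ m, eps 1 2 m * u m = s * u 0
        rw [Fin.sum_univ_three]
        norm_num [eps]
      rw [s01, s02, s12] at h4
      -- h4 : 8 * (s*u2*(β2*αk) - (-(s*u1))*(β1*αk) + (β0*αk)*(s*u0)) = 0
      have hpos : 0 < s := Real.sqrt_pos.mpr (hgN q.1).1.det_pos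
      have hinvpd : ((gN q.1)⁻¹).PosDef := Matrix.posDef_inv_iff.mpr (hgN q.1).1
      have hquad : 0 < β q.1 ⬝ᵥ u := by
        have := hinvpd.dotProduct_mulVec_pos (hβnv q.1)
        rwa [star_trivial] at this
      have hdot : β q.1 ⬝ᵥ u = β q.1 0 * u 0 + β q.1 1 * u 1 + β q.1 2 * u 2 := by
        simp [dotProduct, Fin.sum_univ_three]
      have key : α q.2 k * (s * (β q.1 ⬝ᵥ u)) = 0 := by
        rw [hdot]
        linear_combination h4 / 8
      rcases mul_eq_zero.mp key with h5 | h5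
      · exact h5
      · exact absurd h5 (mul_pos hpos hquad).ne'
    · intro h0 v
      rw [wedgeSq_eq W hWt]
      set s := Real.sqrt (gN q.1).det with hs
      set u := (gN q.1)⁻¹ *ᵥ β q.1 with hu
      have hW' : ∀ x y : (Fin 3 ⊕ Fin 3) → ℝ, x ⬝ᵥ W *ᵥ y =
          s * ((x (Sum.inl 0) * y (Sum.inl 1) - x (Sum.inl 1) * y (Sum.inl 0)) * u 2
            - (x (Sum.inl 0) * y (Sum.inl 2) - x (Sum.inl 2) * y (Sum.inl 0)) * u 1
            + (x (Sum.inl 1) * y (Sum.inl 2) - x (Sum.inl 2) * y (Sum.inl 1)) * u 0) := by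
        intro x y
        have hzero : ∀ i j : Fin 3, W (Sum.inr i) (Sum.inr j) = 0 := by
          intro i j
          show star1 (gY q.2) (α q.2) i j = 0
          rw [h0]
          exact star1_zero (gY q.2) i j
        have hmix : ∀ i j : Fin 3, W (Sum.inl i) (Sum.inr j) = 0 := by
          intro i j
          show β q.1 i * α q.2 j = 0
          rw [h0]
          simp
        have hmix' : ∀ i j : Fin 3, W (Sum.inr i) (Sum.inl j) = 0 := by
          intro i j
          show -(β q.1 j * α q.2 i) = 0
          rw [h0]
          simp
        have hsN : ∀ i j : Fin 3, W (Sum.inl i) (Sum.inl j)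
            = s * (eps i j 0 * u 0 + eps i j 1 * u 1 + eps i j 2 * u 2) := by
          intro i j
          show s * ∑ m, eps i j m * u m = _
          rw [Fin.sum_univ_three]
        simp only [dotProduct, Matrix.mulVec, Fintype.sum_sum_type, Fin.sum_univ_three,
          hzero, hmix, hmix', hsN]
        norm_num [eps]
        try ring
      rw [hW' (v 0) (v 1), hW' (v 2) (v 3), hW' (v 0) (v 2), hW' (v 1) (v 3),
        hW' (v 0) (v 3), hW' (v 1) (v 2)]
      ring
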